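/- For $t \geq 1$, let $\pi$ be an overpartition in $\overline{\mathcal{B}}_0(\alpha_1,\ldots,\alpha_\lambda;\eta,k,r)$ such that the smallest overlined part of $\pi$ divisible by $\eta$ is greater than $\overline{t\eta}$ (or no such part exists), and such that the smallest part starting a $(k-1)$-band $g(\pi)$ satisfies $t\eta \leq g(\pi) < \overline{(t+1)\eta}$. Then the non-overlined part $t\eta$ occurs in $\pi$. -/

import Mathlib

/-- A part of an overpartition: a size together with a flag telling
whether the part is overlined. -/
structure OPart where
  size : ℕ
  overlined : Bool
deriving DecidableEq

/-- The value of a part in the ordering `1̄ < 1 < 2̄ < 2 < ⋯`: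
an overlined part of size `t` has value `2t - 1`, a non-overlined one `2t`. -/
def OPart.val (p : OPart) : ℕ := 2 * p.size - (if p.overlined then 1 else 0)

def dpart : OPart := ⟨0, false⟩

/-- value of the `i`-th part (0-based). -/
def pval (π : List OPart) (i : ℕ) : ℕ := (π.getD i dpart).val

def pover (π : List OPart) (i : ℕ) : Bool := (π.getD i dpart).overlined

def psize (π : List OPart) (i : ℕ) : ℕ := (π.getD i dpart).size

/-- the weight `|π|`: the sum of the sizes of the parts. -/
def wt (π : List OPart) : ℕ := (π.map OPart.size).sum

/-- An overpartition: a sequence of positive parts, non-increasing in the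
ordering `1̄ < 1 < 2̄ < 2 < ⋯`, in which each size is overlined at most once
(the overlined copy, being smallest among equal sizes, is the last occurrence). -/
def IsOverPartition (π : List OPart) : Prop :=
  List.Pairwise (fun p q : OPart => q.val ≤ p.val) π ∧
  (∀ p ∈ π, 0 < p.size) ∧
  (∀ t : ℕ, π.count (⟨t, true⟩ : OPart) ≤ 1)

/-- `{π_{i+l}}_{0 ≤ l ≤ m-1}` is an `m`-band of `π`:
`π_i ≤ π_{i+m-1} + η`, with strict inequality if `π_i` is overlined. -/
def IsBand (η : ℕ) (π : List OPart) (m i : ℕ) : Prop :=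
  i + m ≤ π.length ∧
  pval π i ≤ pval π (i + m - 1) + 2 * η ∧
  (pover π i = true → pval π i < pval π (i + m - 1) + 2 * η)

/-- `V̄_π(N)`: the number of overlined parts of value at most `N`
whose size is not divisible by `η`. -/
def Vbar (η : ℕ) (π : List OPart) (N : ℕ) : ℕ :=
  π.countP (fun p => p.overlined && decide (p.val ≤ N) && !(decide (p.size % η = 0)))

/-- `Ō_π(N)`: the number of overlined parts of value at least `N`
whose size is divisible by `η`. -/
def Obar (η : ℕ) (π : List OPart) (N : ℕ) : ℕ :=
  π.countP (fun p => p.overlined && decide (N ≤ p.val) && decide (p.size % η = 0))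

/-- `f_{≤η}(π)`: the number of parts not exceeding `η`. -/
def fLe (η : ℕ) (π : List OPart) : ℕ :=
  π.countP (fun p => decide (p.val ≤ 2 * η))

/-- `[|π_i|/η] + ⋯ + [|π_{i+m-1}|/η]`. -/
def bandSum (η : ℕ) (π : List OPart) (i m : ℕ) : ℕ :=
  ∑ l ∈ Finset.range m, psize π (i + l) / η

/-- Every part is congruent to `0, α_1, …, α_λ` modulo `η`. -/
def CongParts (α : ℕ → ℕ) (lam η : ℕ) (π : List OPart) : Prop :=
  ∀ p ∈ π, p.size % η = 0 ∨ ∃ s, 1 ≤ s ∧ s ≤ lam ∧ p.size % η = α s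

/-- The class `B̄(α_1,…,α_λ; η, k, r)`: conditions (1)–(4) of the definition
of `B̄₀`. -/
def InBbar (α : ℕ → ℕ) (lam η k r : ℕ) (π : List OPart) : Prop :=
  IsOverPartition π ∧
  CongParts α lam η π ∧
  (∀ p ∈ π, p.overlined = false → η ∣ p.size) ∧
  (∀ i, i + k ≤ π.length →
    pval π (i + k - 1) + 2 * η ≤ pval π i ∧
    (pover π i = false → pval π (i + k - 1) + 2 * η < pval π i)) ∧
  fLe η π ≤ r

/-- An `m`-band at `i` is even:
`[|π_i|/η]+⋯+[|π_{i+m-1}|/η] ≡ r - 1 + V̄_π(π_i) + Ō_π(π_{i+m-1}) (mod 2)`. -/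
def EvenBand (η r : ℕ) (π : List OPart) (m i : ℕ) : Prop :=
  Int.ModEq 2 (bandSum η π i m)
    ((r : ℤ) - 1 + (Vbar η π (pval π i) : ℤ) + (Obar η π (pval π (i + m - 1)) : ℤ))

/-- Condition (5) of the definition of `B̄₀`. -/
def Cond5 (η k r : ℕ) (π : List OPart) : Prop :=
  fLe η π = r → (⟨η, true⟩ : OPart) ∉ π →
    ∃ i, IsBand η π (k - 1) i ∧ pval π i < 2 * (2 * η) - 1

/-- The class `B̄₀(α_1,…,α_λ; η, k, r)`: conditions (1)–(6). -/
def InB0 (α : ℕ → ℕ) (lam η k r : ℕ) (π : List OPart) : Prop :=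
  InBbar α lam η k r π ∧ Cond5 η k r π ∧
  ∀ i, IsBand η π (k - 1) i → EvenBand η r π (k - 1) i

/-- `s(π) > t̄η`: every overlined part divisible by `η` has size `> tη`. -/
def SGt (η t : ℕ) (π : List OPart) : Prop :=
  ∀ p ∈ π, p.overlined = true → η ∣ p.size → t * η < p.size

/-- `s(π) = t̄η`. -/
def SEq (η t : ℕ) (π : List OPart) : Prop :=
  (⟨t * η, true⟩ : OPart) ∈ π ∧
  ∀ p ∈ π, p.overlined = true → η ∣ p.size → t * η ≤ p.size

/-- `g(π) ≥ x` (value `x`): every part starting a `(k-1)`-band has value `≥ x`. -/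
def GGe (η k : ℕ) (π : List OPart) (x : ℕ) : Prop :=
  ∀ i, IsBand η π (k - 1) i → x ≤ pval π i

/-- `g(π) < x`: some part starting a `(k-1)`-band has value `< x`. -/
def GLt (η k : ℕ) (π : List OPart) (x : ℕ) : Prop :=
  ∃ i, IsBand η π (k - 1) i ∧ pval π i < x

/-- `π ∈ B̄₀^=(α_1,…,α_λ; η,k,r | t)`. -/
def InBeq (α : ℕ → ℕ) (lam η k r t : ℕ) (π : List OPart) : Prop :=
  InB0 α lam η k r π ∧
  ((SEq η t π ∧ GGe η k π (2 * (t * η) - 1)) ∨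
   (SGt η t π ∧ GGe η k π (2 * (t * η)) ∧ GLt η k π (2 * ((t + 1) * η) - 1)))

/-- `π ∈ B̄₀^>(α_1,…,α_λ; η,k,r | t)`. -/
def InBgt (α : ℕ → ℕ) (lam η k r t : ℕ) (π : List OPart) : Prop :=
  InB0 α lam η k r π ∧ SGt η t π ∧ GGe η k π (2 * ((t + 1) * η) - 1)

/-- An `m`-band belonging to the closed interval `[(t-1)η, (t+1)η]`. -/
def BandInC (η t : ℕ) (π : List OPart) (m i : ℕ) : Prop :=
  IsBand η π m i ∧ 2 * ((t - 1) * η) ≤ pval π (i + m - 1) ∧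
  pval π i ≤ 2 * ((t + 1) * η)

/-- An `m`-band belonging to `[(t-1)η, \overline{(t+1)η})`. -/
def BandInO (η t : ℕ) (π : List OPart) (m i : ℕ) : Prop :=
  IsBand η π m i ∧ 2 * ((t - 1) * η) ≤ pval π (i + m - 1) ∧
  pval π i < 2 * ((t + 1) * η) - 1

/-- An `m`-band at `i` is of type N. -/
def TypeN (η r t : ℕ) (π : List OPart) (m i : ℕ) : Prop :=
  Int.ModEq 2 (bandSum η π i m)
    ((t : ℤ) + (r : ℤ) - 1 + (Vbar η π (pval π i) : ℤ) +
      (Obar η π (pval π (i + m - 1)) : ℤ))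

/-- `π` is obtained from `μ` by inserting the part `p`. -/
def InsertPart (μ : List OPart) (p : OPart) (π : List OPart) : Prop :=
  ∃ l1 l2, μ = l1 ++ l2 ∧ π = l1 ++ p :: l2

/-- The `(k-1)`-reduction `D_t` as a relation: `μ = D_t(π)`. -/
def DtRel (η t : ℕ) (π μ : List OPart) : Prop :=
  ((⟨t * η, true⟩ : OPart) ∈ π ∧ InsertPart μ ⟨t * η, true⟩ π) ∨
  ((⟨t * η, true⟩ : OPart) ∉ π ∧ InsertPart μ ⟨t * η, false⟩ π)

/-- `μ` has a `(k-2)`-band belonging to `[(t-1)η, \overline{(t+1)η})` of type N. -/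
def HasTypeNBand (η r k t : ℕ) (μ : List OPart) : Prop :=
  ∃ i, BandInO η t μ (k - 2) i ∧ TypeN η r t μ (k - 2) i

/-- The `(k-1)`-augmentation `C_t` as a relation: `π = C_t(μ)`. -/
def CtRel (η r k t : ℕ) (μ π : List OPart) : Prop :=
  (HasTypeNBand η r k t μ ∧ InsertPart μ ⟨t * η, false⟩ π) ∨
  (¬ HasTypeNBand η r k t μ ∧ InsertPart μ ⟨t * η, true⟩ π)

/-- `B₁`-type overpartitions: conditions (1)–(4), no overlined part divisible
by `η`, and at most `r - 1` parts not exceeding `η`. -/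
def InB1over (α : ℕ → ℕ) (lam η k r : ℕ) (π : List OPart) : Prop :=
  InBbar α lam η k r π ∧ (∀ p ∈ π, p.overlined = true → ¬ η ∣ p.size) ∧ fLe η π < r

/-- `D_η`: partitions into distinct parts divisible by `η`. -/
def InD (η : ℕ) (τ : List ℕ) : Prop :=
  List.Pairwise (· > ·) τ ∧ ∀ x ∈ τ, 0 < x ∧ η ∣ x

/-- Bressoud's class `B₁(α_1,…,α_λ; η,k,r)` of ordinary partitions. -/
def InB1nat (α : ℕ → ℕ) (lam η k r : ℕ) (σ : List ℕ) : Prop :=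
  List.Pairwise (· ≥ ·) σ ∧ (∀ x ∈ σ, 0 < x) ∧
  (∀ x ∈ σ, x % η = 0 ∨ ∃ s, 1 ≤ s ∧ s ≤ lam ∧ x % η = α s) ∧
  (∀ x : ℕ, ¬ η ∣ x → σ.count x ≤ 1) ∧
  (∀ i, i + k ≤ σ.length →
    σ.getD (i + k - 1) 0 + η ≤ σ.getD i 0 ∧
    (η ∣ σ.getD i 0 → σ.getD (i + k - 1) 0 + η < σ.getD i 0)) ∧
  σ.countP (fun x => decide (x ≤ η)) < r

/-- The class `Ā₀(α_1,…,α_λ; η,k,r)`. Congruence conditions involving `η/2`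
are stated with sizes doubled. -/
def InA0 (α : ℕ → ℕ) (lam η k r : ℕ) (π : List OPart) : Prop :=
  IsOverPartition π ∧
  CongParts α lam η π ∧
  (Even lam →
    ∀ p ∈ π, p.overlined = false →
      η ∣ p.size ∧
      ¬ (2 * η * (2 * k - lam - 1) ∣ 2 * p.size) ∧
      2 * p.size % (2 * η * (2 * k - lam - 1)) ≠ η * (2 * r - lam) ∧
      2 * p.size % (2 * η * (2 * k - lam - 1)) ≠
        2 * η * (2 * k - lam - 1) - η * (2 * r - lam)) ∧
  (¬ Even lam →
    (∀ p ∈ π, p.overlined = false →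
      η ∣ 2 * p.size ∧
      p.size % (2 * η) ≠ η ∧
      ¬ (2 * η * (2 * k - lam - 1) ∣ 2 * p.size) ∧
      2 * p.size % (2 * η * (2 * k - lam - 1)) ≠ η * (2 * r - lam) ∧
      2 * p.size % (2 * η * (2 * k - lam - 1)) ≠
        2 * η * (2 * k - lam - 1) - η * (2 * r - lam)) ∧
    (∀ p ∈ π, p.overlined = true → 2 * p.size % (2 * η) ≠ η))

/-!
Let `π_i` start a `(k-1)`-band with `tη ≤ π_i < \overline{(t+1)η}`. If `π_i` is not overlined,
it is a multiple of `η`, hence `tη`. Otherwise the band inequality is strict, so every part of the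
band lies within `η` below `π_i`, and a non-overlined one among them is again forced to be `tη`.
If all parts of the band were overlined, they would be `k - 1` distinct sizes in a window of
length `η`, none divisible by `η` (as `s(π) > \overline{tη}`), hence with `k - 1` distinct
residues among `α_1, …, α_λ`, contradicting `k - 1 > λ`.
-/

lemma eq_mul_of_dvd_of_lt_add {η s t : ℕ} (h : η ∣ s) (h₁ : t * η < s + η)
    (h₂ : s < t * η + η) : s = t * η := by
  obtain ⟨q, rfl⟩ := h
  have hq₁ : t < q + 1 := Nat.lt_of_mul_lt_mul_right (show t * η < (q + 1) * η by linarith)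
  have hq₂ : q < t + 1 := Nat.lt_of_mul_lt_mul_right (show q * η < (t + 1) * η by linarith)
  rw [show q = t by omega, mul_comm]

lemma OPart.val_of_overlined {p : OPart} (h : p.overlined = true) :
    p.val = 2 * p.size - 1 := by
  simp [OPart.val, h]

lemma OPart.val_of_not_overlined {p : OPart} (h : p.overlined = false) : p.val = 2 * p.size := by
  simp [OPart.val, h]

lemma getD_mem_of_lt {π : List OPart} {i : ℕ} (h : i < π.length) : π.getD i dpart ∈ π :=
  List.getD_eq_getElem _ _ h ▸ List.getElem_mem h

lemma pval_antitone {π : List OPart} (hsort : π.Pairwise fun p q => q.val ≤ p.val) {n m : ℕ}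
    (hnm : n ≤ m) (hm : m < π.length) : pval π m ≤ pval π n := by
  rcases hnm.eq_or_lt with rfl | h
  · exact le_rfl
  · simp only [pval, List.getD_eq_getElem _ _ hm, List.getD_eq_getElem _ _ (h.trans hm)]
    exact List.pairwise_iff_getElem.1 hsort n m _ hm h

lemma exists_getD_eq_of_mem_take_drop {π : List OPart} {i m : ℕ} {p : OPart}
    (hp : p ∈ (π.drop i).take m) :
    ∃ l < m, i + l < π.length ∧ π.getD (i + l) dpart = p := by
  obtain ⟨j, hj, rfl⟩ := List.mem_iff_getElem.1 hp
  simp only [List.length_take, List.length_drop] at hj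
  refine ⟨j, by omega, by omega, ?_⟩
  rw [List.getD_eq_getElem _ _ (by omega), List.getElem_take, List.getElem_drop]

lemma IsBand.val_bounds_of_mem {η m i : ℕ} {π : List OPart}
    (hsort : π.Pairwise fun p q => q.val ≤ p.val) (hb : IsBand η π m i) {p : OPart}
    (hp : p ∈ (π.drop i).take m) : pval π (i + m - 1) ≤ p.val ∧ p.val ≤ pval π i := by
  obtain ⟨l, hl, hlen, rfl⟩ := exists_getD_eq_of_mem_take_drop hp
  exact ⟨pval_antitone hsort (by omega) (by have := hb.1; omega),
    pval_antitone hsort (by omega) hlen⟩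

lemma nodup_of_sublist_of_forall_overlined {B π : List OPart}
    (hcount : ∀ t : ℕ, π.count (⟨t, true⟩ : OPart) ≤ 1) (hsub : B.Sublist π)
    (hov : ∀ p ∈ B, p.overlined = true) : B.Nodup := by
  refine List.nodup_iff_count_le_one.2 fun p => ?_
  by_cases hp : p ∈ B
  · obtain ⟨s, o⟩ := p
    obtain rfl : o = true := hov _ hp
    exact (hsub.count_le _).trans (hcount s)
  · simp [List.count_eq_zero_of_not_mem hp]

/-- Pigeonhole: overlined parts of distinct sizes in a window of length `η` have distinct
residues modulo `η`. -/
lemma length_le_card_of_forall_overlined {η a : ℕ} {R : Finset ℕ} {B : List OPart}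
    (hnd : B.Nodup) (hov : ∀ p ∈ B, p.overlined = true)
    (hwin : ∀ p ∈ B, p.size ≤ a ∧ a < p.size + η) (hres : ∀ p ∈ B, p.size % η ∈ R) :
    B.length ≤ R.card := by
  rw [← List.toFinset_card_of_nodup hnd]
  refine Finset.card_le_card_of_injOn (fun p => p.size % η)
    (fun p hp => hres p (by simpa using hp)) fun p hp q hq hpq => ?_
  simp only [List.coe_toFinset, Set.mem_ofPred_eq] at hp hq
  have hsize : p.size = q.size := Nat.ModEq.eq_of_abs_lt hpq (by
    have := hwin p hp; have := hwin q hq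
    rw [abs_sub_lt_iff]; omega)
  obtain ⟨ps, po⟩ := p
  obtain ⟨qs, qo⟩ := q
  obtain rfl : po = true := hov _ hp
  obtain rfl : qo = true := hov _ hq
  simp_all

lemma mk_mem_of_not_overlined {η t : ℕ} {π : List OPart}
    (hdvd : ∀ p ∈ π, p.overlined = false → η ∣ p.size) {p : OPart} (hp : p ∈ π)
    (hpo : p.overlined = false) (h₁ : t * η < p.size + η) (h₂ : p.size < t * η + η) :
    (⟨t * η, false⟩ : OPart) ∈ π := by
  obtain ⟨s, o⟩ := p
  obtain rfl : o = false := hpo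
  rwa [← eq_mul_of_dvd_of_lt_add (hdvd _ hp rfl) h₁ h₂]

lemma length_le_of_forall_overlined {α : ℕ → ℕ} {lam η t a : ℕ} {π B : List OPart}
    (hop : IsOverPartition π) (hcong : CongParts α lam η π) (hs : SGt η t π)
    (hsub : B.Sublist π) (hov : ∀ p ∈ B, p.overlined = true)
    (hwin : ∀ p ∈ B, p.size ≤ a ∧ a < p.size + η) (ha : a < t * η + η) : B.length ≤ lam := by
  refine (length_le_card_of_forall_overlined (R := (Finset.Icc 1 lam).image α)
    (nodup_of_sublist_of_forall_overlined hop.2.2 hsub hov) hov hwin fun p hp => ?_).trans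
    (Finset.card_image_le.trans (by simp))
  have hpπ := hsub.subset hp
  obtain ⟨hpa, -⟩ := hwin p hp
  rcases hcong p hpπ with hres | ⟨s, hs₁, hs₂, hres⟩
  · have hdvd : η ∣ p.size := Nat.dvd_of_mod_eq_zero hres
    have hgt := hs p hpπ (hov p hp) hdvd
    have := eq_mul_of_dvd_of_lt_add (t := t) hdvd (by omega) (by omega)
    omega
  · simpa using ⟨s, ⟨hs₁, hs₂⟩, hres.symm⟩

lemma IsBand.exists_not_overlined {α : ℕ → ℕ} {lam η t m i : ℕ} {π : List OPart}
    (hop : IsOverPartition π) (hcong : CongParts α lam η π) (hs : SGt η t π)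
    (hb : IsBand η π m i) (hm : lam < m) (hi : pover π i = true)
    (hlt : pval π i < 2 * (t * η + η) - 1) :
    ∃ p ∈ (π.drop i).take m, p.overlined = false := by
  have hsub : ((π.drop i).take m).Sublist π :=
    (List.take_sublist _ _).trans (List.drop_sublist _ _)
  have hx : π.getD i dpart ∈ π := getD_mem_of_lt (by have := hb.1; omega)
  have hxpos : 0 < psize π i := hop.2.1 _ hx
  have hival : pval π i = 2 * psize π i - 1 := OPart.val_of_overlined hi
  have hstrict : pval π i < pval π (i + m - 1) + 2 * η := hb.2.2 hi
  by_contra! hall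
  simp only [ne_eq, Bool.not_eq_false] at hall
  have hlen : ((π.drop i).take m).length = m := by
    simp only [List.length_take, List.length_drop]; have := hb.1; omega
  have hwin : ∀ p ∈ (π.drop i).take m, p.size ≤ psize π i ∧ psize π i < p.size + η := by
    intro p hp
    have hpval := OPart.val_of_overlined (hall p hp)
    have := hb.val_bounds_of_mem hop.1 hp
    have := hop.2.1 p (hsub.subset hp)
    omega
  have := length_le_of_forall_overlined hop hcong hs hsub hall hwin (by omega)
  omega

theorem stmt_6_general (α : ℕ → ℕ) (lam η k r : ℕ)
    (hlk : lam + 1 < k)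
    (t : ℕ) (π : List OPart) (hπ : InB0 α lam η k r π)
    (hs : SGt η t π) (hg1 : GGe η k π (2 * (t * η)))
    (hg2 : GLt η k π (2 * ((t + 1) * η) - 1)) :
    (⟨t * η, false⟩ : OPart) ∈ π := by
  obtain ⟨⟨hop, hcong, hdvd, -, -⟩, -, -⟩ := hπ
  obtain ⟨i, hband, hlt⟩ := hg2
  have hge : 2 * (t * η) ≤ pval π i := hg1 i hband
  rw [add_one_mul] at hlt
  cases hio : pover π i
  · have hx : π.getD i dpart ∈ π := getD_mem_of_lt (by have := hband.1; omega)
    have hival : pval π i = 2 * (π.getD i dpart).size := OPart.val_of_not_overlined hio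
    exact mk_mem_of_not_overlined hdvd hx hio (by omega) (by omega)
  · obtain ⟨p, hpB, hpo⟩ := hband.exists_not_overlined hop hcong hs (by omega) hio hlt
    have hpval := OPart.val_of_not_overlined hpo
    have := hband.val_bounds_of_mem hop.1 hpB
    have hstrict : pval π i < pval π (i + (k - 1) - 1) + 2 * η := hband.2.2 hio
    exact mk_mem_of_not_overlined hdvd (List.mem_of_mem_drop (List.mem_of_mem_take hpB)) hpo
      (by omega) (by omega)

theorem stmt_6 (α : ℕ → ℕ) (lam η k r : ℕ)
    (hη : 0 < η)
    (hαpos : ∀ i, 1 ≤ i → i ≤ lam → 0 < α i ∧ α i < η)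
    (hαmono : ∀ i j, 1 ≤ i → i < j → j ≤ lam → α i < α j)
    (hαsym : ∀ i, 1 ≤ i → i ≤ lam → α i = η - α (lam + 1 - i))
    (hrk : r < k) (hlr : lam ≤ r) (hlk : lam + 1 < k)
    (t : ℕ) (ht : 1 ≤ t) (π : List OPart) (hπ : InB0 α lam η k r π)
    (hs : SGt η t π) (hg1 : GGe η k π (2 * (t * η)))
    (hg2 : GLt η k π (2 * ((t + 1) * η) - 1)) :
    (⟨t * η, false⟩ : OPart) ∈ π :=
  stmt_6_general α lam η k r hlk t π hπ hs hg1 hg2
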